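/- arXiv:1607.00736 — 3 statements merged into one kernel-verified Lean document; each statement's English description precedes it below -/
import Mathlib

section
/- For all positive integers p and q, ζ({1}^{p-1}, q+1) = ζ({1}^{q-1}, p+1), i.e. the multiple zeta value with p−1 leading ones followed by q+1 equals the one with q−1 leading ones followed by p+1. -/
/-!
For `m ≥ 1` one has `m⁻¹ ^ q = ∑_{l₁ < ⋯ < l_q} (l₁ ⋯ l_q)⁻¹ · C(l_q + m, m)⁻¹`, by induction
on `q`: summing over the new largest entry `a > b` telescopes, since
`C(a + m, a)⁻¹ / a = (C(a - 1 + m, a - 1)⁻¹ - C(a + m, a)⁻¹) / m`, and the empty tuple is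
handled by reading its largest entry as `0`.
Taking `m = k_p` rewrites `ζ({1}^{p-1}, q+1)` as the double sum over `k₁ < ⋯ < k_p` and
`l₁ < ⋯ < l_q` of `(k₁ ⋯ k_p l₁ ⋯ l_q)⁻¹ · C(k_p + l_q, k_p)⁻¹`, which is symmetric under
exchanging `(p, k)` and `(q, l)`. All sums are taken in `ℝ≥0∞`, where they may be freely
reordered.
-/

/-- The multiple zeta value `ζ(α_1, …, α_r) = ∑_{1 ≤ k_1 < ⋯ < k_r} k_1^{-α_1} ⋯ k_r^{-α_r}`. -/
noncomputable def mzv {r : ℕ} (α : Fin r → ℕ) : ℝ :=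
  ∑' k : {k : Fin r → ℕ+ // StrictMono k}, ∏ i, (1 : ℝ) / ((k.1 i : ℕ) : ℝ) ^ (α i)

open Filter Topology Finset
open scoped ENNReal

theorem ENNReal.tsum_eq_of_add_succ_eq {f g : ℕ → ℝ≥0∞} (h : ∀ n, g n + f (n + 1) = f n)
    (hf : Tendsto f atTop (𝓝 0)) : ∑' n, g n = f 0 := by
  have partial_sum : ∀ n, ∑ i ∈ range n, g i + f n = f 0 := by
    intro n
    induction n with
    | zero => simp
    | succ n ih => rw [sum_range_succ, add_assoc, h, ih]
  have := (ENNReal.tendsto_nat_tsum g).add hf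
  simp only [partial_sum, add_zero] at this
  exact (tendsto_const_nhds_iff.mp this).symm

noncomputable def invChoose (a b : ℕ) : ℝ≥0∞ := ((a + b).choose a : ℝ≥0∞)⁻¹

lemma invChoose_comm (a b : ℕ) : invChoose a b = invChoose b a := by
  rw [invChoose, invChoose, add_comm b a, Nat.choose_symm_add]

lemma invChoose_zero_left (b : ℕ) : invChoose 0 b = 1 := by
  simp [invChoose]

lemma ENNReal.natCast_inv_eq_ofReal {n : ℕ} (hn : 0 < n) :
    ((n : ℝ≥0∞))⁻¹ = ENNReal.ofReal (n : ℝ)⁻¹ := by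
  rw [ENNReal.ofReal_inv_of_pos (by exact_mod_cast hn), ENNReal.ofReal_natCast]

lemma invChoose_succ_mul_add (a m : ℕ) (hm : 0 < m) :
    invChoose (a + 1) m * ((a + 1 : ℕ) : ℝ≥0∞)⁻¹ + invChoose (a + 1) m * (m : ℝ≥0∞)⁻¹ =
      invChoose a m * (m : ℝ≥0∞)⁻¹ := by
  have key : ((a + 1 + m).choose (a + 1) : ℝ) * (a + 1) = (a + m + 1) * (a + m).choose a := by
    rw [Nat.add_right_comm]; exact_mod_cast (Nat.add_one_mul_choose_eq (a + m) a).symm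
  have h1 : 0 < (a + 1 + m).choose (a + 1) := Nat.choose_pos (by omega)
  have h2 : 0 < (a + m).choose a := Nat.choose_pos (by omega)
  simp only [invChoose, ENNReal.natCast_inv_eq_ofReal h1, ENNReal.natCast_inv_eq_ofReal h2,
    ENNReal.natCast_inv_eq_ofReal hm, ENNReal.natCast_inv_eq_ofReal (Nat.succ_pos a)]
  rw [← ENNReal.ofReal_mul (by positivity), ← ENNReal.ofReal_mul (by positivity),
    ← ENNReal.ofReal_mul (by positivity), ← ENNReal.ofReal_add (by positivity) (by positivity)]
  congr 1
  field_simp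
  push_cast
  linear_combination (-1 : ℝ) * key

lemma tendsto_invChoose_atTop (m : ℕ) (hm : 0 < m) :
    Tendsto (fun n => invChoose n m) atTop (𝓝 0) := by
  have hchoose : Tendsto (fun n => (n + m).choose n) atTop atTop := by
    refine tendsto_atTop_mono (fun n => ?_) tendsto_id
    calc n ≤ (n + 1).choose n := by rw [Nat.choose_succ_self_right]; omega
      _ ≤ (n + m).choose n := Nat.choose_le_choose n (by omega)
  have := tendsto_inv_iff.mpr (ENNReal.tendsto_nat_nhds_top.comp hchoose)
  simpa [invChoose] using this

lemma tsum_invChoose_mul_inv (b m : ℕ) (hm : 0 < m) :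
    ∑' j, invChoose (b + j + 1) m * ((b + j + 1 : ℕ) : ℝ≥0∞)⁻¹ =
      invChoose b m * (m : ℝ≥0∞)⁻¹ := by
  refine ENNReal.tsum_eq_of_add_succ_eq (f := fun j => invChoose (b + j) m * (m : ℝ≥0∞)⁻¹)
    (fun j => ?_) ?_
  · simpa [← add_assoc] using invChoose_succ_mul_add (b + j) m hm
  · simpa using ENNReal.Tendsto.mul_const ((tendsto_invChoose_atTop m hm).comp
      (tendsto_atTop_atTop_of_monotone (fun _ _ h => by omega) fun n => ⟨n, by omega⟩))
      (Or.inr (by simp [hm.ne']))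

abbrev IncTuple (r : ℕ) := {k : Fin r → ℕ+ // StrictMono k}

namespace IncTuple

variable {r : ℕ}

def maxEntry (k : IncTuple r) : ℕ := univ.sup fun i => (k.1 i : ℕ)

noncomputable def invProd (k : IncTuple r) : ℝ≥0∞ := ∏ i, ((k.1 i : ℕ) : ℝ≥0∞)⁻¹

lemma le_maxEntry (k : IncTuple r) (i : Fin r) : (k.1 i : ℕ) ≤ k.maxEntry :=
  le_sup (f := fun i => (k.1 i : ℕ)) (mem_univ i)

lemma maxEntry_eq_last {n : ℕ} (k : IncTuple (n + 1)) : k.maxEntry = k.1 (Fin.last n) :=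
  le_antisymm (Finset.sup_le fun i _ => k.2.monotone (Fin.le_last i)) (k.le_maxEntry _)

def snoc (k : IncTuple r) (j : ℕ) : IncTuple (r + 1) :=
  ⟨Fin.snoc k.1 (k.maxEntry + j).succPNat, by
    rw [← Fin.insertNth_last', Fin.strictMono_insertNth_iff]
    refine ⟨k.2, fun i _ => ?_, fun i hi => absurd hi (Fin.castSucc_lt_last i).not_ge⟩
    have := k.le_maxEntry i
    rw [← PNat.coe_lt_coe, Nat.succPNat_coe]
    omega⟩

def init (k : IncTuple (r + 1)) : IncTuple r := ⟨Fin.init k.1, k.2.comp Fin.strictMono_castSucc⟩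

@[simp]
lemma snoc_last (k : IncTuple r) (j : ℕ) :
    ((k.snoc j).1 (Fin.last r) : ℕ) = k.maxEntry + j + 1 := by
  simp [snoc]

@[simp]
lemma init_snoc (k : IncTuple r) (j : ℕ) : (k.snoc j).init = k :=
  Subtype.ext (by simp [init, snoc])

lemma maxEntry_snoc (k : IncTuple r) (j : ℕ) : (k.snoc j).maxEntry = k.maxEntry + j + 1 := by
  rw [maxEntry_eq_last, snoc_last]

lemma invProd_snoc (k : IncTuple r) (j : ℕ) :
    (k.snoc j).invProd = k.invProd * ((k.maxEntry + j + 1 : ℕ) : ℝ≥0∞)⁻¹ := by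
  simp [invProd, snoc, Fin.prod_univ_castSucc]

lemma maxEntry_init_lt_last (k : IncTuple (r + 1)) : k.init.maxEntry < k.1 (Fin.last r) :=
  (Finset.sup_lt_iff (k.1 _).pos).2 fun i _ => k.2 (Fin.castSucc_lt_last i)

def snocEquiv (r : ℕ) : IncTuple r × ℕ ≃ IncTuple (r + 1) where
  toFun x := x.1.snoc x.2
  invFun k := (k.init, (k.1 (Fin.last r) : ℕ) - k.init.maxEntry - 1)
  left_inv := fun ⟨k, j⟩ => by simp only [init_snoc, snoc_last, Prod.mk.injEq, true_and]; omega
  right_inv k := by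
    have h := k.maxEntry_init_lt_last
    refine Subtype.ext ?_
    show Fin.snoc (Fin.init k.1) _ = k.1
    conv_rhs => rw [← Fin.snoc_init_self k.1]
    congr 1
    apply PNat.eq
    simp only [Nat.succPNat_coe]
    omega

lemma tsum_succ (f : IncTuple (r + 1) → ℝ≥0∞) :
    ∑' k, f k = ∑' (k : IncTuple r) (j : ℕ), f (k.snoc j) := by
  rw [← (snocEquiv r).tsum_eq, ENNReal.tsum_prod']
  rfl

instance : Unique (IncTuple 0) where
  default := ⟨finZeroElim, fun i => i.elim0⟩
  uniq _ := Subtype.ext (funext fun i => i.elim0)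

theorem tsum_invProd_mul_invChoose (q m : ℕ) (hm : 0 < m) :
    ∑' l : IncTuple q, l.invProd * invChoose l.maxEntry m = (m : ℝ≥0∞)⁻¹ ^ q := by
  induction q with
  | zero => simp [invProd, maxEntry, invChoose_zero_left]
  | succ q ih =>
    calc ∑' l : IncTuple (q + 1), l.invProd * invChoose l.maxEntry m
        = ∑' l : IncTuple q, l.invProd * ∑' j,
            invChoose (l.maxEntry + j + 1) m * ((l.maxEntry + j + 1 : ℕ) : ℝ≥0∞)⁻¹ := by
          simp only [tsum_succ, invProd_snoc, maxEntry_snoc, ← ENNReal.tsum_mul_left, mul_assoc,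
            mul_comm (invChoose _ m)]
      _ = (m : ℝ≥0∞)⁻¹ ^ (q + 1) := by
          simp only [tsum_invChoose_mul_inv _ m hm, ← mul_assoc, ENNReal.tsum_mul_right, ih,
            pow_succ]

lemma prod_inv_pow_eq {p : ℕ} (q : ℕ) (hp : 0 < p) (k : IncTuple p) :
    ∏ i, ((k.1 i : ℕ) : ℝ≥0∞)⁻¹ ^ (if i.val = p - 1 then q + 1 else 1) =
      k.invProd * ((k.maxEntry : ℝ≥0∞))⁻¹ ^ q := by
  obtain ⟨n, rfl⟩ := Nat.exists_eq_add_one_of_ne_zero hp.ne'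
  have hlast (i : Fin (n + 1)) : i.val = n + 1 - 1 ↔ i = Fin.last n := by
    simp [Fin.ext_iff]
  simp only [hlast]
  rw [Fin.prod_univ_castSucc, invProd, Fin.prod_univ_castSucc, k.maxEntry_eq_last]
  simp [(Fin.castSucc_lt_last _).ne, pow_succ', mul_assoc]

end IncTuple

lemma mzv_eq_toReal_tsum {r : ℕ} (α : Fin r → ℕ) :
    mzv α = (∑' k : IncTuple r, ∏ i, ((k.1 i : ℕ) : ℝ≥0∞)⁻¹ ^ α i).toReal := by
  have hfin (k : IncTuple r) : ∏ i, ((k.1 i : ℕ) : ℝ≥0∞)⁻¹ ^ α i ≠ ⊤ :=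
    ENNReal.prod_ne_top fun i _ => ENNReal.pow_ne_top (ENNReal.inv_ne_top.mpr (by simp))
  rw [mzv, ENNReal.tsum_toReal_eq hfin]
  simp [ENNReal.toReal_prod]

lemma mzv_ones_eq_tsum (p q : ℕ) (hp : 0 < p) :
    mzv (fun i : Fin p => if i.val = p - 1 then q + 1 else 1) =
      (∑' (k : IncTuple p) (l : IncTuple q),
        k.invProd * l.invProd * invChoose l.maxEntry k.maxEntry).toReal := by
  have hmax (k : IncTuple p) : 0 < k.maxEntry :=
    Finset.lt_sup_iff.2 ⟨⟨0, hp⟩, mem_univ _, (k.1 _).pos⟩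
  simp only [mzv_eq_toReal_tsum, IncTuple.prod_inv_pow_eq q hp, mul_assoc, ENNReal.tsum_mul_left,
    IncTuple.tsum_invProd_mul_invChoose q _ (hmax _)]

/-- Drinfel'd duality: `ζ({1}^{p-1}, q+1) = ζ({1}^{q-1}, p+1)`. -/
theorem drinfeld_duality (p q : ℕ) (hp : 0 < p) (hq : 0 < q) :
    mzv (fun i : Fin p => if i.val = p - 1 then q + 1 else 1) =
    mzv (fun i : Fin q => if i.val = q - 1 then p + 1 else 1) := by
  rw [mzv_ones_eq_tsum p q hp, mzv_ones_eq_tsum q p hq, ENNReal.tsum_comm]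
  congr 1
  refine tsum_congr fun l => tsum_congr fun k => ?_
  rw [invChoose_comm, mul_comm l.invProd]
end

section
/- For positive integers p, q and nonnegative integer m, ∑_{|α|=p+m} ζ(α_1,…,α_{p−1}, α_p + q) = ∑_{|β|=q+m} ζ(β_1,…,β_{q−1}, β_q + p), where the first sum is over p-tuples of positive integers α with α_1+⋯+α_p = p+m and the second over q-tuples of positive integers β with β_1+⋯+β_q = q+m. -/
/-!
For `0 ≤ x < 1` deform the multiple zeta series, replacing each factor `1 / m^(k+1)` by
`1 / (m^k (m - x))`. Expanding `1 / (m - x)` geometrically shows that the deformed value of an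
index is the generating function `∑ₘ xᵐ Oₘ` of its Ohno sums `Oₘ`.

Two deformed nested sums are joined into a connected sum by the connector
`C(m, n) = Γ(m) Γ(n) / Γ(m + n)`, `Γ(t) = (1 - x) ⋯ (t - x)`. Since
`C(a, n) / n = C(a + 1, n) / n + C(a + 1, n) / (a + 1 - x)`, the sum `∑_{m > a} C(m, n) / (m - x)`
telescopes to `C(a, n) / n`, so a trailing exponent `1` on one side of a connected sum can be
removed at the price of raising the last exponent on the other side by one. Moving every
entry across turns the index `(1, …, 1, q + 1)` of length `p` into `(1, …, 1, p + 1)` of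
length `q`. Hence the two generating functions agree on `[0, 1)`, and since the Ohno sums grow
at most like `2ᵐ` their coefficients agree.
-/

open Filter Topology
open scoped ENNReal

namespace ENNReal

theorem tsum_eq_of_telescope {g d : ℕ → ℝ≥0∞} (h : ∀ a, g a = g (a + 1) + d (a + 1))
    (hg : Tendsto g atTop (𝓝 0)) (b : ℕ) : ∑' j, d (b + 1 + j) = g b := by
  have partial_sum (N : ℕ) : ∑ j ∈ Finset.range N, d (b + 1 + j) + g (N + b) = g b := by
    induction N with
    | zero => simp
    | succ N ih =>
      rw [Finset.sum_range_succ, add_assoc, ← ih, h (N + b)]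
      ring_nf
  have hlim : Tendsto (fun N ↦ ∑ j ∈ Finset.range N, d (b + 1 + j) + g (N + b)) atTop
      (𝓝 (∑' j, d (b + 1 + j) + 0)) :=
    (ENNReal.tendsto_nat_tsum _).add (hg.comp (tendsto_add_atTop_nat b))
  simp only [partial_sum, add_zero] at hlim
  exact tendsto_nhds_unique tendsto_const_nhds hlim |>.symm

theorem tsum_le_two_mul_inv_succ {F : ℕ → ℝ≥0∞} (b : ℕ)
    (hF : ∀ d, F d ≤ ((b + 1 + d : ℕ) : ℝ≥0∞)⁻¹ * (2 * (((b + 1 + d : ℕ) : ℝ≥0∞) + 1)⁻¹)) :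
    ∑' d, F d ≤ 2 * ((b : ℝ≥0∞) + 1)⁻¹ := by
  have htele : ∑' d, ((b + 1 + d : ℕ) : ℝ≥0∞)⁻¹ * (((b + 1 + d : ℕ) : ℝ≥0∞) + 1)⁻¹ =
      ((b : ℝ≥0∞) + 1)⁻¹ := by
    refine tsum_eq_of_telescope (g := fun a ↦ ((a : ℝ≥0∞) + 1)⁻¹)
      (d := fun a ↦ (a : ℝ≥0∞)⁻¹ * ((a : ℝ≥0∞) + 1)⁻¹) (fun a ↦ ?_) ?_ b
    · set A : ℝ≥0∞ := (a : ℝ≥0∞) + 1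
      have hA : A ≠ 0 := by simp [A]
      have hA' : A ≠ ⊤ := by simp [A]
      push_cast
      calc A⁻¹ = A⁻¹ * ((A + 1) * (A + 1)⁻¹) := by
            rw [ENNReal.mul_inv_cancel (by simp) (by simpa using hA'), mul_one]
        _ = (A * A⁻¹) * (A + 1)⁻¹ + A⁻¹ * (A + 1)⁻¹ := by ring
        _ = _ := by rw [ENNReal.mul_inv_cancel hA hA', one_mul]
    · simpa [Function.comp_def] using
        ENNReal.tendsto_inv_nat_nhds_zero.comp (tendsto_add_atTop_nat 1)
  refine (ENNReal.tsum_le_tsum hF).trans_eq ?_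
  simp only [mul_left_comm _ (2 : ℝ≥0∞), ENNReal.tsum_mul_left, htele]

theorem inv_natCast_le_two_mul_inv_succ {M : ℕ} (hM : M ≠ 0) :
    (M : ℝ≥0∞)⁻¹ ≤ 2 * ((M : ℝ≥0∞) + 1)⁻¹ := by
  rw [← div_eq_mul_inv, ENNReal.le_div_iff_mul_le (by simp) (by simp), mul_add,
    ENNReal.inv_mul_cancel (by simpa using hM) (by simp), mul_one, ← one_add_one_eq_two]
  gcongr
  exact ENNReal.inv_le_one.2 (by exact_mod_cast Nat.one_le_iff_ne_zero.2 hM)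

theorem tsum_pow_mul_eq_add (x : ℝ≥0∞) (A : ℕ → ℝ≥0∞) :
    ∑' j, x ^ j * A j = A 0 + x * ∑' j, x ^ j * A (j + 1) := by
  rw [tsum_eq_zero_add' ENNReal.summable, ← ENNReal.tsum_mul_left]
  simp only [pow_zero, one_mul, pow_succ]
  congr 1
  exact tsum_congr fun j ↦ by ring

theorem tsum_pow_mul_le_two_mul {x C : ℝ≥0∞} {A : ℕ → ℝ≥0∞} (hA : ∀ j, A j ≤ C * 2 ^ j)
    (hx : x ≤ 4⁻¹) : ∑' j, x ^ j * A j ≤ 2 * C := by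
  have h2x : 2 * x ≤ 2⁻¹ :=
    calc 2 * x ≤ 2 * 4⁻¹ := by gcongr
      _ = 2⁻¹ := by
        rw [show (4 : ℝ≥0∞) = 2 * 2 by norm_num, ENNReal.mul_inv (by simp) (by simp),
          ← mul_assoc, ENNReal.mul_inv_cancel (by simp) (by simp), one_mul]
  calc ∑' j, x ^ j * A j ≤ ∑' j, C * (2 * x) ^ j :=
        ENNReal.tsum_le_tsum fun j ↦
          calc x ^ j * A j ≤ x ^ j * (C * 2 ^ j) := by gcongr; exact hA j
            _ = C * (2 * x) ^ j := by ring
    _ = C * (1 - 2 * x)⁻¹ := by rw [ENNReal.tsum_mul_left, ENNReal.tsum_geometric]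
    _ ≤ C * (1 - 2⁻¹)⁻¹ := by gcongr
    _ = 2 * C := by rw [ENNReal.one_sub_inv_two, inv_inv, mul_comm]

theorem tendsto_tsum_pow_mul_nhdsGT_zero {C : ℝ≥0∞} {A : ℕ → ℝ≥0∞} (hC : C ≠ ⊤)
    (hA : ∀ j, A j ≤ C * 2 ^ j) :
    Tendsto (fun x ↦ ∑' j, x ^ j * A j) (𝓝[>] 0) (𝓝 (A 0)) := by
  have hA' (j : ℕ) : A (j + 1) ≤ 2 * C * 2 ^ j := (hA (j + 1)).trans_eq (by ring)
  have hupper : Tendsto (fun x ↦ A 0 + x * (2 * (2 * C))) (𝓝[>] 0) (𝓝 (A 0)) := by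
    have : Tendsto (fun x : ℝ≥0∞ ↦ x * (2 * (2 * C))) (𝓝[>] 0) (𝓝 (0 * (2 * (2 * C)))) :=
      ENNReal.Tendsto.mul_const (tendsto_id.mono_left nhdsWithin_le_nhds)
        (Or.inr (by finiteness))
    simpa using tendsto_const_nhds.add this
  refine tendsto_of_tendsto_of_tendsto_of_le_of_le' tendsto_const_nhds hupper
    (Eventually.of_forall fun x ↦ ?_) ?_
  · rw [tsum_pow_mul_eq_add]
    exact le_self_add
  · have hsmall : ∀ᶠ x in 𝓝[>] (0 : ℝ≥0∞), x ≤ 4⁻¹ :=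
      nhdsWithin_le_nhds (eventually_le_nhds (by norm_num))
    filter_upwards [hsmall] with x hx
    rw [tsum_pow_mul_eq_add]
    gcongr
    exact tsum_pow_mul_le_two_mul hA' hx

theorem eq_of_eventually_tsum_pow_mul_eq {C : ℝ≥0∞} {A B : ℕ → ℝ≥0∞} (hC : C ≠ ⊤)
    (hA : ∀ j, A j ≤ C * 2 ^ j) (hB : ∀ j, B j ≤ C * 2 ^ j)
    (h : ∀ᶠ x in 𝓝[>] 0, ∑' j, x ^ j * A j = ∑' j, x ^ j * B j) : A = B := by
  have shift {A : ℕ → ℝ≥0∞} (hA : ∀ j, A j ≤ C * 2 ^ j) (n j : ℕ) :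
      A (j + n) ≤ C * 2 ^ n * 2 ^ j := by
    rw [mul_assoc, ← pow_add, add_comm n]
    exact hA _
  have head_eq (n : ℕ)
      (hn : ∀ᶠ x in 𝓝[>] 0, ∑' j, x ^ j * A (j + n) = ∑' j, x ^ j * B (j + n)) : A n = B n := by
    simpa using tendsto_nhds_unique_of_eventuallyEq
      (tendsto_tsum_pow_mul_nhdsGT_zero (by finiteness) (shift hA n))
      (tendsto_tsum_pow_mul_nhdsGT_zero (by finiteness) (shift hB n)) hn
  have tail_eq (n : ℕ) :
      ∀ᶠ x in 𝓝[>] 0, ∑' j, x ^ j * A (j + n) = ∑' j, x ^ j * B (j + n) := by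
    induction n with
    | zero => simpa using h
    | succ n ih =>
      have hn := head_eq n ih
      have hfin : A n ≠ ⊤ := ((hA n).trans_lt (by finiteness)).ne
      have hlt : ∀ᶠ x in 𝓝[>] (0 : ℝ≥0∞), x < ⊤ :=
        nhdsWithin_le_nhds (eventually_lt_nhds (by simp))
      filter_upwards [ih, self_mem_nhdsWithin, hlt] with x hx hx0 hxt
      rw [tsum_pow_mul_eq_add x (fun j ↦ A (j + n)), tsum_pow_mul_eq_add x (fun j ↦ B (j + n)),
        zero_add, hn, ENNReal.add_right_inj (hn ▸ hfin),
        ENNReal.mul_right_inj (ne_of_gt hx0) hxt.ne] at hx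
      simpa only [add_right_comm _ 1 n, add_assoc] using hx
  exact funext fun n ↦ head_eq n (tail_eq n)

end ENNReal

namespace Ohno

variable {x : ℝ≥0∞}

noncomputable def natSub (x : ℝ≥0∞) (a : ℕ) : ℝ≥0∞ := a - x

noncomputable def facSub (x : ℝ≥0∞) (t : ℕ) : ℝ≥0∞ := ∏ k ∈ Finset.range t, natSub x (k + 1)

noncomputable def connector (x : ℝ≥0∞) (m n : ℕ) : ℝ≥0∞ :=
  facSub x m * facSub x n * (facSub x (m + n))⁻¹

/-- Entry `k` of an index list stands for the exponent `k + 1`. -/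
noncomputable def weight (x : ℝ≥0∞) (k m : ℕ) : ℝ≥0∞ := ((m : ℝ≥0∞) ^ k)⁻¹ * (natSub x m)⁻¹

lemma natSub_ne_top (a : ℕ) : natSub x a ≠ ⊤ :=
  ne_top_of_le_ne_top (ENNReal.natCast_ne_top a) tsub_le_self

lemma natSub_succ_ne_zero (hx : x < 1) (a : ℕ) : natSub x (a + 1) ≠ 0 :=
  (tsub_pos_of_lt (hx.trans_le (by simp))).ne'

lemma natCast_le_natSub_succ (hx : x ≤ 1) (a : ℕ) : (a : ℝ≥0∞) ≤ natSub x (a + 1) := by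
  rw [natSub, Nat.cast_succ]
  exact ENNReal.le_sub_of_add_le_left (hx.trans_lt ENNReal.one_lt_top).ne
    (by rw [add_comm]; gcongr)

lemma natSub_succ_add (hx : x < 1) (a n : ℕ) : natSub x (a + 1) + n = natSub x (a + 1 + n) := by
  rw [natSub, natSub, ENNReal.sub_add_eq_add_sub (hx.le.trans (by simp))
    (hx.trans ENNReal.one_lt_top).ne]
  push_cast
  rfl

lemma facSub_zero : facSub x 0 = 1 := Finset.prod_range_zero _

lemma facSub_succ (t : ℕ) : facSub x (t + 1) = facSub x t * natSub x (t + 1) :=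
  Finset.prod_range_succ _ _

lemma facSub_ne_zero (hx : x < 1) (t : ℕ) : facSub x t ≠ 0 :=
  Finset.prod_ne_zero_iff.2 fun k _ ↦ natSub_succ_ne_zero hx k

lemma facSub_ne_top (t : ℕ) : facSub x t ≠ ⊤ :=
  ENNReal.prod_ne_top fun _ _ ↦ natSub_ne_top _

lemma connector_comm (m n : ℕ) : connector x m n = connector x n m := by
  rw [connector, connector, add_comm m n, mul_comm (facSub x m)]

lemma connector_zero_right (hx : x < 1) (m : ℕ) : connector x m 0 = 1 := by
  rw [connector, add_zero, facSub_zero, mul_one,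
    ENNReal.mul_inv_cancel (facSub_ne_zero hx m) (facSub_ne_top m)]

lemma connector_zero_left (hx : x < 1) (n : ℕ) : connector x 0 n = 1 := by
  rw [connector_comm, connector_zero_right hx]

lemma connector_succ_left_mul (hx : x < 1) (a n : ℕ) :
    connector x (a + 1) n * natSub x (a + 1 + n) = connector x a n * natSub x (a + 1) := by
  have hcancel : (natSub x (a + n + 1))⁻¹ * natSub x (a + n + 1) = 1 :=
    ENNReal.inv_mul_cancel (natSub_succ_ne_zero hx _) (natSub_ne_top _)
  rw [connector, connector, add_right_comm, facSub_succ, facSub_succ,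
    ENNReal.mul_inv (Or.inl (facSub_ne_zero hx _)) (Or.inl (facSub_ne_top _))]
  calc facSub x a * natSub x (a + 1) * facSub x n *
        ((facSub x (a + n))⁻¹ * (natSub x (a + n + 1))⁻¹) * natSub x (a + n + 1)
      = facSub x a * facSub x n * (facSub x (a + n))⁻¹ * natSub x (a + 1) *
        ((natSub x (a + n + 1))⁻¹ * natSub x (a + n + 1)) := by ring
    _ = _ := by rw [hcancel, mul_one]

lemma connector_mul_inv_eq_add (hx : x < 1) (a : ℕ) {n : ℕ} (hn : n ≠ 0) :
    connector x a n * (n : ℝ≥0∞)⁻¹ =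
      connector x (a + 1) n * (n : ℝ≥0∞)⁻¹ + connector x (a + 1) n * (natSub x (a + 1))⁻¹ := by
  set D := natSub x (a + 1)
  have hD : D * D⁻¹ = 1 := ENNReal.mul_inv_cancel (natSub_succ_ne_zero hx a) (natSub_ne_top _)
  have hn' : (n : ℝ≥0∞) * (n : ℝ≥0∞)⁻¹ = 1 := ENNReal.mul_inv_cancel (by simpa) (by simp)
  have hconn : connector x a n = connector x (a + 1) n * (D + n) * D⁻¹ := by
    rw [natSub_succ_add hx, connector_succ_left_mul hx, mul_assoc, hD, mul_one]
  calc connector x a n * (n : ℝ≥0∞)⁻¹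
      = connector x (a + 1) n * (D * D⁻¹) * (n : ℝ≥0∞)⁻¹ +
        connector x (a + 1) n * (n * (n : ℝ≥0∞)⁻¹) * D⁻¹ := by rw [hconn]; ring
    _ = _ := by rw [hD, hn', mul_one]

lemma connector_le (hx : x < 1) (a : ℕ) {n : ℕ} (hn : n ≠ 0) :
    connector x a n ≤ facSub x n * (a : ℝ≥0∞)⁻¹ := by
  obtain ⟨n, rfl⟩ := Nat.exists_eq_succ_of_ne_zero hn
  have hsplit : facSub x (a + (n + 1)) =
      facSub x a * ∏ j ∈ Finset.range (n + 1), natSub x (a + j + 1) :=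
    Finset.prod_range_add _ a (n + 1)
  have hprod : (a : ℝ≥0∞) ≤ ∏ j ∈ Finset.range (n + 1), natSub x (a + j + 1) := by
    rw [Finset.prod_range_succ']
    refine le_mul_of_one_le_of_le (Finset.one_le_prod' fun j _ ↦ ?_)
      (natCast_le_natSub_succ hx.le a)
    exact le_trans (by norm_cast; omega) (natCast_le_natSub_succ hx.le (a + (j + 1)))
  rw [connector, hsplit, ENNReal.mul_inv (Or.inl (facSub_ne_zero hx a)) (Or.inl (facSub_ne_top a)),
    mul_comm (facSub x a), mul_assoc, ← mul_assoc (facSub x a),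
    ENNReal.mul_inv_cancel (facSub_ne_zero hx a) (facSub_ne_top a), one_mul]
  gcongr

lemma tsum_connector_mul_inv_natSub (hx : x < 1) {n : ℕ} (hn : n ≠ 0) (b : ℕ) :
    ∑' j, connector x (b + 1 + j) n * (natSub x (b + 1 + j))⁻¹ =
      connector x b n * (n : ℝ≥0∞)⁻¹ := by
  refine ENNReal.tsum_eq_of_telescope (g := fun a ↦ connector x a n * (n : ℝ≥0∞)⁻¹)
    (d := fun a ↦ connector x a n * (natSub x a)⁻¹) (fun a ↦ connector_mul_inv_eq_add hx a hn) ?_ b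
  have hlim : Tendsto (fun a : ℕ ↦ facSub x n * (n : ℝ≥0∞)⁻¹ * (a : ℝ≥0∞)⁻¹) atTop (𝓝 0) := by
    simpa using ENNReal.Tendsto.const_mul ENNReal.tendsto_inv_nat_nhds_zero
      (Or.inr (ENNReal.mul_ne_top (facSub_ne_top n) (by simpa using hn)))
  refine tendsto_of_tendsto_of_tendsto_of_le_of_le tendsto_const_nhds hlim (fun _ ↦ zero_le)
    fun a ↦ ?_
  calc connector x a n * (n : ℝ≥0∞)⁻¹ ≤ facSub x n * (a : ℝ≥0∞)⁻¹ * (n : ℝ≥0∞)⁻¹ := by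
        gcongr
        exact connector_le hx a hn
    _ = _ := by ring

lemma weight_mul_inv_natCast (k m : ℕ) :
    weight x k m * (m : ℝ≥0∞)⁻¹ = weight x (k + 1) m := by
  rw [weight, weight, pow_succ, ENNReal.mul_inv (by simp) (by simp)]
  ring

lemma weight_zero_left (k m : ℕ) : weight 0 k m = ((m : ℝ≥0∞) ^ (k + 1))⁻¹ := by
  rw [weight, natSub, tsub_zero, pow_succ, ENNReal.mul_inv (by simp) (by simp)]

lemma weight_zero_le_inv (k : ℕ) {m : ℕ} (hm : m ≠ 0) : weight 0 k m ≤ (m : ℝ≥0∞)⁻¹ := by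
  rw [weight_zero_left, pow_succ]
  exact ENNReal.inv_le_inv.2 (le_mul_of_one_le_left'
    (one_le_pow₀ (by exact_mod_cast Nat.one_le_iff_ne_zero.2 hm)))

lemma weight_eq_tsum (k : ℕ) {m : ℕ} (hm : m ≠ 0) :
    weight x k m = ∑' t, x ^ t * weight 0 (k + t) m := by
  have hm0 : (m : ℝ≥0∞) ≠ 0 := by exact_mod_cast hm
  have hmt : (m : ℝ≥0∞) ≠ ⊤ := ENNReal.natCast_ne_top m
  have hfactor : natSub x m = m * (1 - x * (m : ℝ≥0∞)⁻¹) := by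
    rw [ENNReal.mul_sub (fun _ _ ↦ hmt), mul_one, mul_left_comm,
      ENNReal.mul_inv_cancel hm0 hmt, mul_one, natSub]
  rw [weight, hfactor, ENNReal.mul_inv (Or.inl hm0) (Or.inl hmt), ← ENNReal.tsum_geometric,
    ← ENNReal.tsum_mul_left, ← ENNReal.tsum_mul_left]
  refine tsum_congr fun t ↦ ?_
  rw [weight_zero_left, ENNReal.inv_pow, ENNReal.inv_pow, mul_pow]
  ring

lemma weight_le (hx : x < 1) (k : ℕ) {m : ℕ} (hm : m ≠ 0) :
    weight x k m ≤ (1 - x)⁻¹ * weight 0 k m := by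
  have hmx : (m : ℝ≥0∞) * (1 - x) ≤ natSub x m := by
    refine ENNReal.le_sub_of_add_le_right (hx.trans ENNReal.one_lt_top).ne ?_
    calc (m : ℝ≥0∞) * (1 - x) + x ≤ m * (1 - x) + m * x := by
          gcongr
          exact le_mul_of_one_le_left' (by exact_mod_cast Nat.one_le_iff_ne_zero.2 hm)
      _ = m := by rw [← mul_add, tsub_add_cancel_of_le hx.le, mul_one]
  rw [weight, weight_zero_left]
  calc ((m : ℝ≥0∞) ^ k)⁻¹ * (natSub x m)⁻¹ ≤ ((m : ℝ≥0∞) ^ k)⁻¹ * ((m : ℝ≥0∞) * (1 - x))⁻¹ := by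
        gcongr
    _ = (1 - x)⁻¹ * ((m : ℝ≥0∞) ^ (k + 1))⁻¹ := by
      rw [ENNReal.mul_inv (Or.inl (by simpa using hm)) (Or.inl (by simp)), ENNReal.inv_pow,
        ENNReal.inv_pow]
      ring

/-- `nestedSum x [k₁, …, k_r] f b = ∑_{b < m₁ < ⋯ < m_r} (∏ᵢ weight x kᵢ mᵢ) f m_r`. -/
noncomputable def nestedSum (x : ℝ≥0∞) : List ℕ → (ℕ → ℝ≥0∞) → ℕ → ℝ≥0∞
  | [], f, b => f b
  | k :: ks, f, b => ∑' d, weight x k (b + 1 + d) * nestedSum x ks f (b + 1 + d)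

@[simp] lemma nestedSum_nil (f : ℕ → ℝ≥0∞) (b : ℕ) : nestedSum x [] f b = f b := rfl

lemma nestedSum_cons (k : ℕ) (ks : List ℕ) (f : ℕ → ℝ≥0∞) (b : ℕ) :
    nestedSum x (k :: ks) f b = ∑' d, weight x k (b + 1 + d) * nestedSum x ks f (b + 1 + d) :=
  rfl

lemma nestedSum_append (ks ls : List ℕ) (f : ℕ → ℝ≥0∞) (b : ℕ) :
    nestedSum x (ks ++ ls) f b = nestedSum x ks (nestedSum x ls f) b := by
  induction ks generalizing b with
  | nil => rfl
  | cons k ks ih => simp only [List.cons_append, nestedSum_cons, ih]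

lemma nestedSum_mul_left (ks : List ℕ) (c : ℝ≥0∞) (f : ℕ → ℝ≥0∞) (b : ℕ) :
    nestedSum x ks (fun m ↦ c * f m) b = c * nestedSum x ks f b := by
  induction ks generalizing b with
  | nil => rfl
  | cons k ks ih =>
    simp only [nestedSum_cons, ih, ← ENNReal.tsum_mul_left]
    exact tsum_congr fun d ↦ by ring

lemma nestedSum_tsum {ι : Type*} (ks : List ℕ) (f : ι → ℕ → ℝ≥0∞) (b : ℕ) :
    nestedSum x ks (fun m ↦ ∑' e, f e m) b = ∑' e, nestedSum x ks (f e) b := by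
  induction ks generalizing b with
  | nil => rfl
  | cons k ks ih =>
    simp only [nestedSum_cons, ih, ← ENNReal.tsum_mul_left]
    exact ENNReal.tsum_comm

lemma nestedSum_comm (ks ls : List ℕ) (f : ℕ → ℕ → ℝ≥0∞) (a b : ℕ) :
    nestedSum x ls (fun n ↦ nestedSum x ks (fun m ↦ f m n) b) a =
      nestedSum x ks (fun m ↦ nestedSum x ls (f m) a) b := by
  induction ls generalizing a with
  | nil => rfl
  | cons l ls ih => simp only [nestedSum_cons, ih, ← nestedSum_mul_left, ← nestedSum_tsum]

lemma nestedSum_le_pow_mul (hx : x < 1) (ks : List ℕ) (f : ℕ → ℝ≥0∞) (b : ℕ) :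
    nestedSum x ks f b ≤ (1 - x)⁻¹ ^ ks.length * nestedSum 0 ks f b := by
  induction ks generalizing b with
  | nil => simp
  | cons k ks ih =>
    simp only [nestedSum_cons, List.length_cons, ← ENNReal.tsum_mul_left]
    refine ENNReal.tsum_le_tsum fun d ↦ ?_
    calc weight x k (b + 1 + d) * nestedSum x ks f (b + 1 + d)
        ≤ (1 - x)⁻¹ * weight 0 k (b + 1 + d) *
          ((1 - x)⁻¹ ^ ks.length * nestedSum 0 ks f (b + 1 + d)) :=
          mul_le_mul' (weight_le hx k (by omega)) (ih _)
      _ = _ := by ring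

lemma nestedSum_zero_append_le (ks : List ℕ) {K : ℕ} (hK : K ≠ 0) (b : ℕ) :
    nestedSum 0 (ks ++ [K]) (fun _ ↦ 1) b ≤ 2 * ((b : ℝ≥0∞) + 1)⁻¹ := by
  induction ks generalizing b with
  | nil =>
    refine ENNReal.tsum_le_two_mul_inv_succ b fun d ↦ ?_
    have hm : b + 1 + d ≠ 0 := by omega
    rw [nestedSum_nil, mul_one, ← Nat.sub_add_cancel (Nat.one_le_iff_ne_zero.2 hK),
      ← weight_mul_inv_natCast]
    exact mul_le_mul' (weight_zero_le_inv _ hm) (ENNReal.inv_natCast_le_two_mul_inv_succ hm)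
  | cons k ks ih =>
    exact ENNReal.tsum_le_two_mul_inv_succ b fun d ↦
      mul_le_mul' (weight_zero_le_inv _ (by omega)) (ih _)

lemma nestedSum_singleton_zero_connector (hx : x < 1) {n : ℕ} (hn : n ≠ 0) (b : ℕ) :
    nestedSum x [0] (fun m ↦ connector x m n) b = (n : ℝ≥0∞)⁻¹ * connector x b n := by
  rw [mul_comm, ← tsum_connector_mul_inv_natSub hx hn]
  exact tsum_congr fun d ↦ by simp [weight, mul_comm]

lemma nestedSum_zero_nestedSum_connector (hx : x < 1) (k m n : ℕ) :
    nestedSum x [0] (fun n' ↦ nestedSum x [k] (fun m' ↦ connector x m' n') m) n =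
      nestedSum x [k + 1] (fun m' ↦ connector x m' n) m := by
  rw [nestedSum_comm [k] [0] (fun m' n' ↦ connector x m' n')]
  refine tsum_congr fun d ↦ ?_
  simp_rw [nestedSum_nil, connector_comm (m + 1 + d)]
  rw [nestedSum_singleton_zero_connector hx (by omega), ← weight_mul_inv_natCast, mul_assoc]

/-- The connected sum
`∑_{0 < m₁ < ⋯ < m_r, 0 < n₁ < ⋯ < n_s} ∏ weight x kᵢ mᵢ ∏ weight x lⱼ nⱼ · connector x m_r n_s`. -/
noncomputable def connSum (x : ℝ≥0∞) (ks ls : List ℕ) : ℝ≥0∞ :=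
  nestedSum x ls (fun n ↦ nestedSum x ks (fun m ↦ connector x m n) 0) 0

lemma connSum_nil_right (hx : x < 1) (ks : List ℕ) :
    connSum x ks [] = nestedSum x ks (fun _ ↦ 1) 0 := by
  simp [connSum, connector_zero_right hx]

lemma connSum_nil_left (hx : x < 1) (ls : List ℕ) :
    connSum x [] ls = nestedSum x ls (fun _ ↦ 1) 0 := by
  simp [connSum, connector_zero_left hx]

lemma connSum_append_zero_left (hx : x < 1) (ks ls : List ℕ) (l : ℕ) :
    connSum x (ks ++ [0]) (ls ++ [l]) = connSum x ks (ls ++ [l + 1]) := by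
  simp only [connSum, nestedSum_append ls, nestedSum_append ks]
  congr 1
  funext b
  refine tsum_congr fun d ↦ ?_
  have hsingle : nestedSum x [0] (fun m ↦ connector x m (b + 1 + d)) =
      fun m ↦ ((b + 1 + d : ℕ) : ℝ≥0∞)⁻¹ * connector x m (b + 1 + d) :=
    funext (nestedSum_singleton_zero_connector hx (by omega))
  rw [nestedSum_nil, nestedSum_nil, hsingle, nestedSum_mul_left, ← weight_mul_inv_natCast,
    mul_assoc]

lemma connSum_append_zero_right (hx : x < 1) (ks ls : List ℕ) (k : ℕ) :
    connSum x (ks ++ [k]) (ls ++ [0]) = connSum x (ks ++ [k + 1]) ls := by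
  simp only [connSum, nestedSum_append ls, nestedSum_append ks]
  congr 1
  funext n
  rw [nestedSum_comm ks [0] (fun m n' ↦ nestedSum x [k] (fun m' ↦ connector x m' n') m)]
  simp only [nestedSum_zero_nestedSum_connector hx]

lemma connSum_append_add (hx : x < 1) (ks ls : List ℕ) (k j : ℕ) :
    connSum x (ks ++ [k + j]) ls = connSum x (ks ++ [k]) (ls ++ List.replicate j 0) := by
  induction j generalizing ls with
  | zero => simp
  | succ j ih =>
    rw [← add_assoc, ← connSum_append_zero_right hx, ih, List.append_assoc,
      List.singleton_append, ← List.replicate_succ]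

lemma connSum_append_replicate (hx : x < 1) (ks ls : List ℕ) (l a : ℕ) :
    connSum x (ks ++ List.replicate a 0) (ls ++ [l]) = connSum x ks (ls ++ [l + a]) := by
  induction a generalizing l with
  | zero => simp
  | succ a ih =>
    rw [List.replicate_succ', ← List.append_assoc, connSum_append_zero_left hx, ih,
      add_right_comm, add_assoc]

lemma nestedSum_replicate_append_comm (hx : x < 1) (a b : ℕ) :
    nestedSum x (List.replicate a 0 ++ [b + 1]) (fun _ ↦ 1) 0 =
      nestedSum x (List.replicate b 0 ++ [a + 1]) (fun _ ↦ 1) 0 := by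
  calc nestedSum x (List.replicate a 0 ++ [b + 1]) (fun _ ↦ 1) 0
      = connSum x (List.replicate (a + 1) 0) (List.replicate (b + 1) 0) := by
        have h := connSum_append_add hx (List.replicate a 0) [] 0 (b + 1)
        rwa [zero_add, List.nil_append, ← List.replicate_succ', connSum_nil_right hx] at h
    _ = nestedSum x (List.replicate b 0 ++ [a + 1]) (fun _ ↦ 1) 0 := by
        rw [List.replicate_succ' (n := b), ← List.nil_append (List.replicate (a + 1) 0),
          connSum_append_replicate hx, connSum_nil_left hx, zero_add]

lemma nestedSum_ofFn_eq_tsum {r : ℕ} (g : Fin r → ℕ) (f : ℕ → ℝ≥0∞) (b : ℕ) :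
    nestedSum x (List.ofFn g) f b =
      ∑' c : Fin r → ℕ, x ^ (∑ i, c i) * nestedSum 0 (List.ofFn fun i ↦ g i + c i) f b := by
  induction r generalizing b with
  | zero => simp
  | succ r ih =>
    have hweight (d : ℕ) :
        weight x (g 0) (b + 1 + d) = ∑' t, x ^ t * weight 0 (g 0 + t) (b + 1 + d) :=
      weight_eq_tsum _ (by omega)
    rw [← (Fin.consEquiv fun _ ↦ ℕ).tsum_eq, ENNReal.tsum_prod', List.ofFn_succ, nestedSum_cons]
    simp only [Fin.consEquiv_apply, Fin.sum_cons, Fin.cons_zero, Fin.cons_succ, List.ofFn_succ,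
      nestedSum_cons, hweight, ih, ← ENNReal.tsum_mul_right, ← ENNReal.tsum_mul_left]
    refine (tsum_congr fun d ↦ ENNReal.tsum_comm).trans (ENNReal.tsum_comm.trans
      (tsum_congr fun t ↦ ENNReal.tsum_comm.trans (tsum_congr fun c ↦ tsum_congr fun d ↦ ?_)))
    ring

/-- The Ohno sum `∑_{|c| = m} ζ(k + c)` of height `m` of the index `k = g + 1`. -/
noncomputable def ohnoSum {r : ℕ} (g : Fin r → ℕ) (m : ℕ) : ℝ≥0∞ :=
  ∑' c : {c : Fin r → ℕ // ∑ i, c i = m},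
    nestedSum 0 (List.ofFn fun i ↦ g i + c.1 i) (fun _ ↦ 1) 0

lemma nestedSum_ofFn_eq_tsum_ohnoSum {r : ℕ} (g : Fin r → ℕ) :
    nestedSum x (List.ofFn g) (fun _ ↦ 1) 0 = ∑' m, x ^ m * ohnoSum g m := by
  rw [nestedSum_ofFn_eq_tsum,
    ← (Equiv.sigmaFiberEquiv fun c : Fin r → ℕ ↦ ∑ i, c i).tsum_eq, ENNReal.tsum_sigma']
  refine tsum_congr fun m ↦ ?_
  rw [ohnoSum, ← ENNReal.tsum_mul_left]
  refine tsum_congr fun c ↦ ?_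
  rw [Equiv.sigmaFiberEquiv_apply, c.2]

lemma nestedSum_zero_ofFn_ne_top {r : ℕ} (g : Fin (r + 1) → ℕ) (hg : g (Fin.last r) ≠ 0) :
    nestedSum 0 (List.ofFn g) (fun _ ↦ 1) 0 ≠ ⊤ := by
  rw [List.ofFn_succ', List.concat_eq_append]
  exact ((nestedSum_zero_append_le _ hg 0).trans_lt (by simp)).ne

lemma ohnoSum_le {r : ℕ} (g : Fin r → ℕ) (m : ℕ) :
    ohnoSum g m ≤ 2 ^ r * nestedSum 0 (List.ofFn g) (fun _ ↦ 1) 0 * 2 ^ m := by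
  have hhalf : (2⁻¹ : ℝ≥0∞) ^ m * ohnoSum g m ≤
      2 ^ r * nestedSum 0 (List.ofFn g) (fun _ ↦ 1) 0 :=
    calc (2⁻¹ : ℝ≥0∞) ^ m * ohnoSum g m ≤ ∑' j, (2⁻¹ : ℝ≥0∞) ^ j * ohnoSum g j :=
          ENNReal.le_tsum m
      _ = nestedSum 2⁻¹ (List.ofFn g) (fun _ ↦ 1) 0 := (nestedSum_ofFn_eq_tsum_ohnoSum g).symm
      _ ≤ (1 - 2⁻¹)⁻¹ ^ (List.ofFn g).length * nestedSum 0 (List.ofFn g) (fun _ ↦ 1) 0 :=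
          nestedSum_le_pow_mul (by norm_num) _ _ _
      _ = _ := by rw [ENNReal.one_sub_inv_two, inv_inv, List.length_ofFn]
  calc ohnoSum g m = 2 ^ m * ((2⁻¹ : ℝ≥0∞) ^ m * ohnoSum g m) := by
        rw [← mul_assoc, ← mul_pow, ENNReal.mul_inv_cancel (by simp) (by simp), one_pow, one_mul]
    _ ≤ 2 ^ m * (2 ^ r * nestedSum 0 (List.ofFn g) (fun _ ↦ 1) 0) := by gcongr
    _ = _ := by ring

def strictMonoConsEquiv (r b : ℕ) :
    (Σ d : ℕ, {k : Fin r → ℕ+ // StrictMono k ∧ ∀ i, b + 1 + d < (k i : ℕ)}) ≃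
      {k : Fin (r + 1) → ℕ+ // StrictMono k ∧ ∀ i, b < (k i : ℕ)} where
  toFun p := ⟨Fin.cons (b + p.1).succPNat p.2.1,
    Fin.strictMono_cons.2 ⟨fun i ↦ by
      have := p.2.2.2 i
      rw [← PNat.coe_lt_coe, Nat.succPNat_coe]
      omega, p.2.2.1⟩,
    Fin.cases (by simp) fun i ↦ by
      have := p.2.2.2 i
      simp only [Fin.cons_succ]
      omega⟩
  invFun k := ⟨(k.1 0 : ℕ) - (b + 1), Fin.tail k.1, k.2.1.comp Fin.strictMono_succ, fun i ↦ by
    have h0 := k.2.2 0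
    have hi : (k.1 0 : ℕ) < k.1 i.succ := k.2.1 (Fin.succ_pos i)
    simp only [Fin.tail]
    omega⟩
  left_inv p := by
    rcases p with ⟨d, k, hk⟩
    refine Sigma.subtype_ext ?_ ?_ <;> simp
  right_inv k := by
    have h0 := k.2.2 0
    have hk0 : (b + ((k.1 0 : ℕ) - (b + 1))).succPNat = k.1 0 := PNat.eq (by simp; omega)
    exact Subtype.ext (by simp only [hk0, Fin.cons_self_tail])

lemma nestedSum_zero_ofFn_eq_tsum {r : ℕ} (g : Fin r → ℕ) (b : ℕ) :
    nestedSum 0 (List.ofFn g) (fun _ ↦ 1) b =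
      ∑' k : {k : Fin r → ℕ+ // StrictMono k ∧ ∀ i, b < (k i : ℕ)},
        ∏ i, ((k.1 i : ℝ≥0∞) ^ (g i + 1))⁻¹ := by
  induction r generalizing b with
  | zero =>
    rw [tsum_eq_single ⟨Fin.elim0, fun i ↦ i.elim0, fun i ↦ i.elim0⟩
      fun k hk ↦ absurd (Subtype.ext (funext fun i ↦ i.elim0)) hk]
    simp
  | succ r ih =>
    rw [List.ofFn_succ, nestedSum_cons, ← (strictMonoConsEquiv r b).tsum_eq, ENNReal.tsum_sigma']
    refine tsum_congr fun d ↦ ?_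
    rw [ih, ← ENNReal.tsum_mul_left]
    refine tsum_congr fun k ↦ ?_
    simp [strictMonoConsEquiv, Fin.prod_univ_succ, weight_zero_left, add_right_comm _ (1 : ℝ≥0∞)]

lemma mzv_add_one_eq_toReal {r : ℕ} (g : Fin r → ℕ) :
    mzv (fun i ↦ g i + 1) = (nestedSum 0 (List.ofFn g) (fun _ ↦ 1) 0).toReal := by
  let e : {k : Fin r → ℕ+ // StrictMono k} ≃
      {k : Fin r → ℕ+ // StrictMono k ∧ ∀ i, 0 < (k i : ℕ)} :=
    Equiv.subtypeEquivRight fun k ↦ ⟨fun h ↦ ⟨h, fun i ↦ (k i).pos⟩, And.left⟩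
  rw [mzv, nestedSum_zero_ofFn_eq_tsum, ← e.tsum_eq,
    ENNReal.tsum_toReal_eq fun k ↦ ENNReal.prod_ne_top fun i _ ↦ by simp]
  refine tsum_congr fun k ↦ ?_
  simp [e, ENNReal.toReal_prod, one_div]

/-- The index `(1, …, 1, q + 1)` of length `p`, in the shifted encoding of `weight`. -/
def ohnoIndex (p q : ℕ) : Fin p → ℕ := fun i ↦ if i.val = p - 1 then q else 0

lemma ofFn_ohnoIndex (a q : ℕ) :
    List.ofFn (ohnoIndex (a + 1) q) = List.replicate a 0 ++ [q] := by
  have hinit : (fun i : Fin a ↦ ohnoIndex (a + 1) q i.castSucc) = fun _ ↦ 0 :=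
    funext fun i ↦ by simp [ohnoIndex, i.isLt.ne]
  rw [List.ofFn_succ', List.concat_eq_append, hinit, List.ofFn_const]
  simp [ohnoIndex]

lemma ohnoSum_ohnoIndex_comm {p q : ℕ} (hp : p ≠ 0) (hq : q ≠ 0) (m : ℕ) :
    ohnoSum (ohnoIndex p q) m = ohnoSum (ohnoIndex q p) m := by
  obtain ⟨a, rfl⟩ := Nat.exists_eq_add_one_of_ne_zero hp
  obtain ⟨b, rfl⟩ := Nat.exists_eq_add_one_of_ne_zero hq
  have hfin (p q : ℕ) :
      nestedSum 0 (List.ofFn (ohnoIndex (p + 1) (q + 1))) (fun _ ↦ 1) 0 ≠ ⊤ :=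
    nestedSum_zero_ofFn_ne_top _ (by simp [ohnoIndex])
  set C₁ := 2 ^ (a + 1) * nestedSum 0 (List.ofFn (ohnoIndex (a + 1) (b + 1))) (fun _ ↦ 1) 0
  set C₂ := 2 ^ (b + 1) * nestedSum 0 (List.ofFn (ohnoIndex (b + 1) (a + 1))) (fun _ ↦ 1) 0
  have hC : C₁ + C₂ ≠ ⊤ := by
    have := hfin a b
    have := hfin b a
    finiteness
  have hgen : ∀ᶠ x in 𝓝[>] (0 : ℝ≥0∞),
      ∑' j, x ^ j * ohnoSum (ohnoIndex (a + 1) (b + 1)) j =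
        ∑' j, x ^ j * ohnoSum (ohnoIndex (b + 1) (a + 1)) j := by
    filter_upwards [Ioo_mem_nhdsGT zero_lt_one] with x hx
    rw [← nestedSum_ofFn_eq_tsum_ohnoSum, ← nestedSum_ofFn_eq_tsum_ohnoSum, ofFn_ohnoIndex,
      ofFn_ohnoIndex]
    exact nestedSum_replicate_append_comm hx.2 a b
  refine congrFun (ENNReal.eq_of_eventually_tsum_pow_mul_eq hC (fun j ↦ ?_) (fun j ↦ ?_) hgen) m
  · exact (ohnoSum_le _ j).trans (by gcongr; exact le_self_add)
  · exact (ohnoSum_le _ j).trans (by gcongr; exact le_add_self)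

def tupleSuccEquiv (p m : ℕ) :
    {c : Fin p → ℕ // ∑ i, c i = m} ≃ {α : Fin p → ℕ // (∀ i, 0 < α i) ∧ ∑ i, α i = p + m} where
  toFun c := ⟨fun i ↦ c.1 i + 1, fun i ↦ Nat.succ_pos _, by
    simp [Finset.sum_add_distrib, c.2, add_comm]⟩
  invFun α := ⟨fun i ↦ α.1 i - 1, by
    have h : ∑ i, (α.1 i - 1 + 1) = p + m :=
      (Finset.sum_congr rfl fun i _ ↦ Nat.sub_add_cancel (α.2.1 i)).trans α.2.2
    simp only [Finset.sum_add_distrib, Finset.sum_const, Finset.card_univ, Fintype.card_fin,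
      smul_eq_mul, mul_one] at h
    dsimp only
    omega⟩
  left_inv c := by simp
  right_inv α := Subtype.ext (funext fun i ↦ Nat.sub_add_cancel (α.2.1 i))

lemma tsum_mzv_eq_toReal_ohnoSum {p : ℕ} (q m : ℕ) (hp : p ≠ 0) (hq : q ≠ 0) :
    ∑' α : {α : Fin p → ℕ // (∀ i, 0 < α i) ∧ ∑ i, α i = p + m},
      mzv (fun i ↦ α.1 i + if i.val = p - 1 then q else 0) =
      (ohnoSum (ohnoIndex p q) m).toReal := by
  obtain ⟨a, rfl⟩ := Nat.exists_eq_add_one_of_ne_zero hp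
  rw [← (tupleSuccEquiv (a + 1) m).tsum_eq, ohnoSum, ENNReal.tsum_toReal_eq fun c ↦
    nestedSum_zero_ofFn_ne_top _ (by simp [ohnoIndex, hq])]
  refine tsum_congr fun c ↦ ?_
  rw [← mzv_add_one_eq_toReal]
  congr 1
  funext i
  simp only [tupleSuccEquiv, Equiv.coe_fn_mk, ohnoIndex]
  ring

end Ohno

/-- Ohno's relation (special case):
`∑_{|α| = p+m} ζ(α_1, …, α_{p-1}, α_p + q) = ∑_{|β| = q+m} ζ(β_1, …, β_{q-1}, β_q + p)`. -/
theorem ohno_special (p q m : ℕ) (hp : 0 < p) (hq : 0 < q) :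
    ∑' α : {α : Fin p → ℕ // (∀ i, 0 < α i) ∧ ∑ i, α i = p + m},
      mzv (fun i => α.1 i + if i.val = p - 1 then q else 0) =
    ∑' β : {β : Fin q → ℕ // (∀ i, 0 < β i) ∧ ∑ i, β i = q + m},
      mzv (fun i => β.1 i + if i.val = q - 1 then p else 0) := by
  rw [Ohno.tsum_mzv_eq_toReal_ohnoSum q m hp.ne' hq.ne',
    Ohno.tsum_mzv_eq_toReal_ohnoSum p m hq.ne' hp.ne', Ohno.ohnoSum_ohnoIndex_comm hp.ne' hq.ne']
end

section
/- For positive integers p and q and real a > −1: ∑_{1 ≤ k_1 < ⋯ < k_p} [(k_1+a)(k_2+a)⋯(k_p+a)]^{−1} k_p^{−q} = ∑_{1 ≤ ℓ_1 < ⋯ < ℓ_q} [(ℓ_1+a)(ℓ_2+a)⋯(ℓ_q+a)]^{−1} ℓ_q^{−p}. (This is the r = 0 case of Theorem 1.4 with m = 0, a parametrized duality.) -/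
/-!
Put `c(m, n) = (b)ₘ (b)ₙ / (b)ₘ₊ₙ` with the rising factorial `(b)ₘ` at `b = 1 + a` (for `a = 0` this
is `1 / (m+n choose m)`). It is symmetric, `c(0, n) = 1`, and
`c(m, n) - c(m + 1, n) = n c(m + 1, n) / (m + 1 + a)`, which telescopes to
`∑_{j > m} c(j, n) / (j + a) = c(m, n) / n`. Iterating over a chain `m < k₁ < ⋯ < k_q` weighted by
`∏ 1 / (kᵢ + a)` gives `c(m, n) / n^q`, hence `n^{-q}` at `m = 0`. Substituting this for
`k_p^{-q}` turns the left side into a double chain sum of the symmetric kernel `c(k_p, ℓ_q)`;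
exchanging the two nonnegative sums (in `ℝ≥0∞`, where no summability is needed) gives the right
side.
-/

open Filter Topology
open scoped ENNReal

namespace ParametrizedDuality

lemma hasSum_sub_succ_of_antitone {u : ℕ → ℝ} (hu : Antitone u) (h : Tendsto u atTop (𝓝 0)) :
    HasSum (fun j => u j - u (j + 1)) (u 0) := by
  rw [hasSum_iff_tendsto_nat_of_nonneg (fun j => sub_nonneg.2 (hu j.le_succ))]
  simp_rw [Finset.sum_range_sub']
  simpa using (tendsto_const_nhds (x := u 0)).sub h

section Connector

variable {b : ℝ}

noncomputable def connector (b : ℝ) (m n : ℕ) : ℝ :=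
  (ascPochhammer ℝ m).eval b * (ascPochhammer ℝ n).eval b / (ascPochhammer ℝ (m + n)).eval b

lemma connector_comm (b : ℝ) (m n : ℕ) : connector b m n = connector b n m := by
  rw [connector, connector, Nat.add_comm, mul_comm]

lemma connector_pos (hb : 0 < b) (m n : ℕ) : 0 < connector b m n :=
  div_pos (mul_pos (ascPochhammer_pos m b hb) (ascPochhammer_pos n b hb))
    (ascPochhammer_pos _ b hb)

lemma connector_zero_left (hb : 0 < b) (n : ℕ) : connector b 0 n = 1 := by
  simp [connector, (ascPochhammer_pos n b hb).ne']

lemma connector_one_right (hb : 0 < b) (m : ℕ) : connector b m 1 = b / (b + m) := by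
  have := (ascPochhammer_pos m b hb).ne'
  rw [connector, ascPochhammer_one, Polynomial.eval_X, ascPochhammer_succ_eval]
  field_simp

lemma connector_succ_right_le (hb : 0 < b) (m n : ℕ) :
    connector b m (n + 1) ≤ connector b m n := by
  have hmn : 0 < b + (m + n : ℕ) := by positivity
  have hsucc : connector b m (n + 1) = connector b m n * ((b + n) / (b + (m + n : ℕ))) := by
    have := (ascPochhammer_pos (m + n) b hb).ne'
    rw [connector, connector, ← add_assoc, ascPochhammer_succ_eval, ascPochhammer_succ_eval]
    field_simp
  rw [hsucc]
  refine mul_le_of_le_one_right (connector_pos hb m n).le ((div_le_one hmn).2 ?_)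
  push_cast
  linarith [(m.cast_nonneg : (0 : ℝ) ≤ m)]

lemma connector_sub_succ_left (hb : 0 < b) (m n : ℕ) :
    connector b m n - connector b (m + 1) n = n / (b + m) * connector b (m + 1) n := by
  have hPm := (ascPochhammer_pos m b hb).ne'
  have hPmn := (ascPochhammer_pos (m + n) b hb).ne'
  have hm : b + m ≠ 0 := by positivity
  have hmn : b + (m + n : ℕ) ≠ 0 := by positivity
  rw [connector, connector, Nat.add_right_comm, ascPochhammer_succ_eval, ascPochhammer_succ_eval]
  field_simp
  push_cast
  ring

lemma tendsto_connector_atTop (hb : 0 < b) {n : ℕ} (hn : 1 ≤ n) :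
    Tendsto (fun m => connector b m n) atTop (𝓝 0) := by
  have hbound : ∀ m, connector b m n ≤ b / (b + m) := fun m => by
    rw [← connector_one_right hb]
    exact antitone_nat_of_succ_le (connector_succ_right_le hb m) hn
  refine squeeze_zero (fun m => (connector_pos hb m n).le) hbound ?_
  exact tendsto_const_nhds.div_atTop
    (tendsto_atTop_add_const_left _ b tendsto_natCast_atTop_atTop)

lemma hasSum_connector (hb : 0 < b) {n : ℕ} (hn : 1 ≤ n) (m : ℕ) :
    HasSum (fun g => connector b (m + g + 1) n / (b + (m + g : ℕ))) (connector b m n / n) := by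
  have hstep := fun g => connector_sub_succ_left hb (m + g) n
  have hanti : Antitone fun g => connector b (m + g) n := antitone_nat_of_succ_le fun g => by
    have := connector_pos hb (m + g + 1) n
    rw [← sub_nonneg, ← add_assoc, hstep]
    positivity
  have hlim := (tendsto_connector_atTop hb hn).comp
    ((tendsto_add_atTop_nat m).congr fun g => add_comm g m)
  have hterm : ∀ g, connector b (m + g + 1) n / (b + (m + g : ℕ))
      = (connector b (m + g) n - connector b (m + (g + 1)) n) / n := fun g => by
    have : (n : ℝ) ≠ 0 := by positivity
    rw [← add_assoc, hstep]
    field_simp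
  simpa only [hterm, add_zero] using (hasSum_sub_succ_of_antitone hanti hlim).div_const (n : ℝ)

end Connector

section ChainSum

variable (f : ℕ → ℝ≥0∞)

/-- `chainSum f s w m = ∑_{m < k₁ < ⋯ < kₛ} f k₁ ⋯ f kₛ · w kₛ` (and `w m` for `s = 0`). -/
noncomputable def chainSum : ℕ → (ℕ → ℝ≥0∞) → ℕ → ℝ≥0∞
  | 0, w, m => w m
  | s + 1, w, m => ∑' g : ℕ, f (m + g + 1) * chainSum s w (m + g + 1)

lemma chainSum_zero (w : ℕ → ℝ≥0∞) (m : ℕ) : chainSum f 0 w m = w m := rfl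

lemma chainSum_succ (s : ℕ) (w : ℕ → ℝ≥0∞) (m : ℕ) :
    chainSum f (s + 1) w m = ∑' g : ℕ, f (m + g + 1) * chainSum f s w (m + g + 1) := rfl

lemma chainSum_congr (s : ℕ) {w w' : ℕ → ℝ≥0∞} {m : ℕ} (h : ∀ k, m < k → w k = w' k) :
    chainSum f (s + 1) w m = chainSum f (s + 1) w' m := by
  induction s generalizing m with
  | zero => exact tsum_congr fun g => by rw [chainSum_zero, chainSum_zero, h _ (by omega)]
  | succ s ih =>
    exact tsum_congr fun g => by rw [ih fun k hk => h k (by omega)]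

lemma chainSum_const_mul (s : ℕ) (C : ℝ≥0∞) (w : ℕ → ℝ≥0∞) (m : ℕ) :
    chainSum f s (fun k => C * w k) m = C * chainSum f s w m := by
  induction s generalizing m with
  | zero => rfl
  | succ s ih =>
    simp only [chainSum_succ, ih, ← ENNReal.tsum_mul_left]
    exact tsum_congr fun g => mul_left_comm _ _ _

lemma chainSum_tsum {ι : Type*} (s : ℕ) (H : ι → ℕ → ℝ≥0∞) (m : ℕ) :
    chainSum f s (fun k => ∑' i, H i k) m = ∑' i, chainSum f s (H i) m := by
  induction s generalizing m with
  | zero => rfl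
  | succ s ih =>
    simp only [chainSum_succ, ih, ← ENNReal.tsum_mul_left]
    exact ENNReal.tsum_comm

lemma chainSum_comm (s t : ℕ) (H : ℕ → ℕ → ℝ≥0∞) (m m' : ℕ) :
    chainSum f s (fun n => chainSum f t (H n) m') m
      = chainSum f t (fun k => chainSum f s (fun n => H n k) m) m' := by
  induction t generalizing m' with
  | zero => rfl
  | succ t ih =>
    simp only [chainSum_succ, chainSum_tsum, chainSum_const_mul, ih]

end ChainSum

section Chains

abbrev ChainAbove (m s : ℕ) : Type := {k : Fin s → ℕ+ // StrictMono k ∧ ∀ i, m < (k i : ℕ)}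

/-- The largest entry of the chain, or `m` for the empty chain. -/
def ChainAbove.top {m s : ℕ} (k : ChainAbove m s) : ℕ :=
  (Fin.cons m (fun i => (k.1 i : ℕ)) : Fin (s + 1) → ℕ) (Fin.last s)

instance (m : ℕ) : Unique (ChainAbove m 0) where
  default := ⟨finZeroElim, fun i => i.elim0, fun i => i.elim0⟩
  uniq _ := Subtype.ext (funext finZeroElim)

def ChainAbove.consEquiv (m s : ℕ) :
    (Σ g : ℕ, ChainAbove (m + g + 1) s) ≃ ChainAbove m (s + 1) where
  toFun x := ⟨Fin.cons (m + x.1).succPNat x.2.1, by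
    refine ⟨Fin.strictMono_cons.2 ⟨fun j => ?_, x.2.2.1⟩, Fin.cases ?_ fun j => ?_⟩
    · exact_mod_cast x.2.2.2 j
    · simp
    · have := x.2.2.2 j
      simp only [Fin.cons_succ]
      omega⟩
  invFun k := ⟨(k.1 0 : ℕ) - m - 1, Fin.tail k.1, fun i j hij => k.2.1 (Fin.succ_lt_succ_iff.2 hij),
    fun i => by
      have h0 := k.2.2 0
      have h := k.2.1 (Fin.succ_pos i)
      simp only [Fin.tail, ← PNat.coe_lt_coe] at h ⊢
      omega⟩
  left_inv x := by
    refine Sigma.subtype_ext ?_ rfl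
    simp only [Fin.cons_zero, Nat.succPNat_coe]
    omega
  right_inv k := by
    have := k.2.2 0
    refine Subtype.ext ?_
    conv_rhs => rw [← Fin.cons_self_tail k.1]
    refine congrArg (fun x : ℕ+ => (Fin.cons x (Fin.tail k.1) : Fin (s + 1) → ℕ+)) (PNat.eq ?_)
    simp only [Nat.succPNat_coe]
    omega

lemma ChainAbove.top_consEquiv {m s : ℕ} (x : Σ g : ℕ, ChainAbove (m + g + 1) s) :
    (consEquiv m s x).top = x.2.top := by
  rcases s with _ | s <;> simp [consEquiv, top, ← Fin.succ_last]

lemma chainSum_eq_tsum (f : ℕ → ℝ≥0∞) (s : ℕ) (w : ℕ → ℝ≥0∞) (m : ℕ) :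
    chainSum f s w m = ∑' k : ChainAbove m s, (∏ i, f (k.1 i)) * w k.top := by
  induction s generalizing m with
  | zero => simp [chainSum_zero, ChainAbove.top]
  | succ s ih =>
    rw [chainSum_succ, ← (ChainAbove.consEquiv m s).tsum_eq, ENNReal.tsum_sigma']
    refine tsum_congr fun g => ?_
    rw [ih, ← ENNReal.tsum_mul_left]
    refine tsum_congr fun l => ?_
    rw [ChainAbove.top_consEquiv]
    simp [ChainAbove.consEquiv, Fin.prod_univ_succ, mul_assoc]

end Chains

section Weights

variable {a : ℝ}

noncomputable def weight (a : ℝ) (k : ℕ) : ℝ≥0∞ := ENNReal.ofReal (1 / ((k : ℝ) + a))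

lemma one_div_natCast_add_nonneg (ha : -1 < a) {k : ℕ} (hk : 0 < k) : 0 ≤ 1 / ((k : ℝ) + a) := by
  have : (1 : ℝ) ≤ k := by exact_mod_cast hk
  exact (one_div_pos.2 (by linarith)).le

lemma chainSum_weight_connector (ha : -1 < a) {n : ℕ} (hn : 1 ≤ n) (t m : ℕ) :
    chainSum (weight a) t (fun k => ENNReal.ofReal (connector (1 + a) k n)) m
      = ENNReal.ofReal (connector (1 + a) m n / n ^ t) := by
  have hb : 0 < 1 + a := by linarith
  induction t generalizing m with
  | zero => simp [chainSum_zero]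
  | succ t ih =>
    have hsum := (hasSum_connector hb hn m).div_const ((n : ℝ) ^ t)
    have hnonneg : ∀ g : ℕ, 0 ≤ connector (1 + a) (m + g + 1) n / (1 + a + (m + g : ℕ)) / n ^ t :=
      fun g => by have := connector_pos hb (m + g + 1) n; positivity
    calc chainSum (weight a) (t + 1) (fun k => ENNReal.ofReal (connector (1 + a) k n)) m
        = ∑' g : ℕ, ENNReal.ofReal
            (connector (1 + a) (m + g + 1) n / (1 + a + (m + g : ℕ)) / n ^ t) := by
          refine tsum_congr fun g => ?_
          rw [ih, weight, ← ENNReal.ofReal_mul (one_div_natCast_add_nonneg ha (by omega))]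
          congr 1
          push_cast
          ring
      _ = ENNReal.ofReal (connector (1 + a) m n / n ^ (t + 1)) := by
          rw [← ENNReal.ofReal_tsum_of_nonneg hnonneg hsum.summable, hsum.tsum_eq, pow_succ',
            div_div]

lemma chainSum_weight_duality (ha : -1 < a) (s t : ℕ) :
    chainSum (weight a) (s + 1) (fun n => ENNReal.ofReal (1 / (n : ℝ) ^ (t + 1))) 0
      = chainSum (weight a) (t + 1) (fun n => ENNReal.ofReal (1 / (n : ℝ) ^ (s + 1))) 0 := by
  have hb : 0 < 1 + a := by linarith
  have hexpand : ∀ s t : ℕ,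
      chainSum (weight a) (s + 1) (fun n => ENNReal.ofReal (1 / (n : ℝ) ^ t)) 0
        = chainSum (weight a) (s + 1) (fun n =>
            chainSum (weight a) t (fun k => ENNReal.ofReal (connector (1 + a) k n)) 0) 0 :=
    fun s t => chainSum_congr _ s fun n hn => by
      rw [chainSum_weight_connector ha hn, connector_zero_left hb]
  rw [hexpand, hexpand, chainSum_comm]
  simp_rw [connector_comm (1 + a)]

lemma tsum_strictMono_eq_toReal_chainSum (ha : -1 < a) (s : ℕ) {w : ℕ → ℝ} (hw : ∀ n, 0 ≤ w n) :
    ∑' k : {k : Fin (s + 1) → ℕ+ // StrictMono k},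
        (∏ i, (1 : ℝ) / (((k.1 i : ℕ) : ℝ) + a)) * w (k.1 (Fin.last s))
      = (chainSum (weight a) (s + 1) (fun n => ENNReal.ofReal (w n)) 0).toReal := by
  let e : {k : Fin (s + 1) → ℕ+ // StrictMono k} ≃ ChainAbove 0 (s + 1) :=
    Equiv.subtypeEquivRight fun k => (and_iff_left fun i => (k i).pos).symm
  have hfactor : ∀ k : ℕ+, 0 ≤ 1 / (((k : ℕ) : ℝ) + a) := fun k =>
    one_div_natCast_add_nonneg ha k.pos
  have hnonneg : ∀ k : {k : Fin (s + 1) → ℕ+ // StrictMono k},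
      0 ≤ (∏ i, (1 : ℝ) / (((k.1 i : ℕ) : ℝ) + a)) * w (k.1 (Fin.last s)) := fun k =>
    mul_nonneg (Finset.prod_nonneg fun i _ => hfactor _) (hw _)
  have hterm : ∀ k, (∏ i, weight a ((e k).1 i)) * ENNReal.ofReal (w (e k).top)
      = ENNReal.ofReal ((∏ i, (1 : ℝ) / (((k.1 i : ℕ) : ℝ) + a)) * w (k.1 (Fin.last s))) := by
    intro k
    have htop : (e k).top = k.1 (Fin.last s) := by simp [e, ChainAbove.top, ← Fin.succ_last]
    rw [htop, ENNReal.ofReal_mul (Finset.prod_nonneg fun i _ => hfactor _),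
      ENNReal.ofReal_prod_of_nonneg fun i _ => hfactor _]
    rfl
  rw [chainSum_eq_tsum, ← e.tsum_eq, tsum_congr hterm,
    ENNReal.tsum_toReal_eq fun _ => ENNReal.ofReal_ne_top]
  exact tsum_congr fun k => (ENNReal.toReal_ofReal (hnonneg k)).symm

end Weights

end ParametrizedDuality

open ParametrizedDuality

/-- Parametrized duality (the `r = 0`, `m = 0` case of Theorem 1.4). -/
theorem parametrized_duality (p q : ℕ) (hp : 0 < p) (hq : 0 < q) (a : ℝ) (ha : -1 < a) :
    ∑' k : {k : Fin p → ℕ+ // StrictMono k},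
      (∏ i, (1 : ℝ) / (((k.1 i : ℕ) : ℝ) + a)) *
        (1 / ((k.1 ⟨p - 1, by omega⟩ : ℕ) : ℝ) ^ q) =
    ∑' l : {l : Fin q → ℕ+ // StrictMono l},
      (∏ i, (1 : ℝ) / (((l.1 i : ℕ) : ℝ) + a)) *
        (1 / ((l.1 ⟨q - 1, by omega⟩ : ℕ) : ℝ) ^ p) := by
  obtain ⟨s, rfl⟩ : ∃ s, p = s + 1 := ⟨p - 1, by omega⟩
  obtain ⟨t, rfl⟩ : ∃ t, q = t + 1 := ⟨q - 1, by omega⟩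
  exact (tsum_strictMono_eq_toReal_chainSum ha s fun n => by positivity).trans
    ((congrArg ENNReal.toReal (chainSum_weight_duality ha s t)).trans
      (tsum_strictMono_eq_toReal_chainSum ha t fun n => by positivity).symm)
end
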